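/- For bounded operators T₁, T₂ on a complex Hilbert space H, the numerical radius of the block operator [[T₁, T₂],[T₂, T₁]] on H ⊕ H equals max{w(T₁ + T₂), w(T₁ − T₂)}. -/

import Mathlib

/-!
The unitary `(a, b) ↦ ((a + b) / √2, (a - b) / √2)` turns `B = [[T₁, T₂], [T₂, T₁]]` into the
diagonal operator `diag(T₁ + T₂, T₁ - T₂)`. Concretely,
`2 ⟪B x, x⟫ = ⟪(T₁ + T₂) u, u⟫ + ⟪(T₁ - T₂) v, v⟫` with `u = x₀ + x₁`, `v = x₀ - x₁`, and the
parallelogram law `‖u‖² + ‖v‖² = 2 ‖x‖²` gives `w(B) ≤ max`. Conversely the vectors `(u, u)`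
and `(u, -u)` realise the numerical ranges of `T₁ + T₂` and `T₁ - T₂` inside that of `B`.
-/

noncomputable def numRadius {E : Type*} [NormedAddCommGroup E] [InnerProductSpace ℂ E]
    (T : E →L[ℂ] E) : ℝ :=
  sSup {r : ℝ | ∃ x : E, ‖x‖ = 1 ∧ r = ‖(inner ℂ (T x) x : ℂ)‖}

noncomputable def blockOp {H : Type*} [NormedAddCommGroup H] [InnerProductSpace ℂ H]
    (n : ℕ) (M : Fin n → Fin n → H →L[ℂ] H) :
    (PiLp 2 fun _ : Fin n => H) →L[ℂ] (PiLp 2 fun _ : Fin n => H) :=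
  (PiLp.continuousLinearEquiv 2 ℂ (fun _ : Fin n => H)).symm.toContinuousLinearMap ∘L
    (ContinuousLinearMap.pi fun i => ∑ j, (M i j).comp (ContinuousLinearMap.proj j)) ∘L
    (PiLp.continuousLinearEquiv 2 ℂ (fun _ : Fin n => H)).toContinuousLinearMap

section numRadius

variable {E : Type*} [NormedAddCommGroup E] [InnerProductSpace ℂ E]

lemma numRadius_nonneg (T : E →L[ℂ] E) : 0 ≤ numRadius T :=
  Real.sSup_nonneg (by rintro r ⟨x, -, rfl⟩; positivity)

lemma numRadius_le_of_norm_inner_le {T : E →L[ℂ] E} {c : ℝ} (hc : 0 ≤ c)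
    (h : ∀ x, ‖(inner ℂ (T x) x : ℂ)‖ ≤ c * ‖x‖ ^ 2) : numRadius T ≤ c :=
  Real.sSup_le (by rintro r ⟨x, hx, rfl⟩; simpa [hx] using h x) hc

lemma bddAbove_numRange_norm (T : E →L[ℂ] E) :
    BddAbove {r : ℝ | ∃ x : E, ‖x‖ = 1 ∧ r = ‖(inner ℂ (T x) x : ℂ)‖} := by
  refine ⟨‖T‖, ?_⟩
  rintro r ⟨x, hx, rfl⟩
  calc ‖(inner ℂ (T x) x : ℂ)‖ ≤ ‖T x‖ * ‖x‖ := norm_inner_le_norm _ _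
    _ ≤ ‖T‖ * ‖x‖ * ‖x‖ := by gcongr; exact T.le_opNorm x
    _ = ‖T‖ := by rw [hx]; ring

lemma norm_inner_le_numRadius_mul_sq (T : E →L[ℂ] E) (y : E) :
    ‖(inner ℂ (T y) y : ℂ)‖ ≤ numRadius T * ‖y‖ ^ 2 := by
  rcases eq_or_ne y 0 with rfl | hy
  · simp
  have hy' : 0 < ‖y‖ := norm_pos_iff.mpr hy
  have hunit : ‖((‖y‖⁻¹ : ℝ) : ℂ) • y‖ = 1 := by
    rw [norm_smul, Complex.norm_real, Real.norm_of_nonneg (inv_nonneg.mpr hy'.le),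
      inv_mul_cancel₀ hy'.ne']
  have hscale : ‖(inner ℂ (T (((‖y‖⁻¹ : ℝ) : ℂ) • y)) (((‖y‖⁻¹ : ℝ) : ℂ) • y) : ℂ)‖ =
      ‖(inner ℂ (T y) y : ℂ)‖ / ‖y‖ ^ 2 := by
    rw [map_smul, inner_smul_left, inner_smul_right, norm_mul, norm_mul, RCLike.norm_conj,
      Complex.norm_real, Real.norm_of_nonneg (inv_nonneg.mpr hy'.le)]
    field_simp
  have hle := le_csSup (bddAbove_numRange_norm T) ⟨_, hunit, hscale.symm⟩
  rwa [div_le_iff₀ (by positivity)] at hle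

lemma numRadius_le_numRadius_of_forall_exists {F : Type*} [NormedAddCommGroup F]
    [InnerProductSpace ℂ F]
    {T : E →L[ℂ] E} {S : F →L[ℂ] F}
    (h : ∀ u, ∃ x, ∃ c : ℝ, 0 < c ∧ ‖x‖ ^ 2 = c * ‖u‖ ^ 2 ∧
      (inner ℂ (S x) x : ℂ) = c * inner ℂ (T u) u) :
    numRadius T ≤ numRadius S := by
  refine numRadius_le_of_norm_inner_le (numRadius_nonneg S) fun u => ?_
  obtain ⟨x, c, hc, hx, hS⟩ := h u
  have := norm_inner_le_numRadius_mul_sq S x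
  rw [hS, hx, norm_mul, Complex.norm_real, Real.norm_of_nonneg hc.le, mul_left_comm] at this
  exact le_of_mul_le_mul_left this hc

end numRadius

lemma PiLp.norm_sq_fin_two {F : Type*} [SeminormedAddCommGroup F]
    (x : PiLp 2 fun _ : Fin 2 => F) :
    ‖x‖ ^ 2 = ‖x 0‖ ^ 2 + ‖x 1‖ ^ 2 := by
  simp [PiLp.norm_sq_eq_of_L2, Fin.sum_univ_two]

variable {H : Type*} [NormedAddCommGroup H] [InnerProductSpace ℂ H]

lemma blockOp_apply (n : ℕ) (M : Matrix (Fin n) (Fin n) (H →L[ℂ] H))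
    (x : PiLp 2 fun _ : Fin n => H) (i : Fin n) :
    blockOp n M x i = ∑ j, M i j (x j) := by
  simp [blockOp]

lemma inner_blockOp_symm_two_self (T₁ T₂ : H →L[ℂ] H) (x : PiLp 2 fun _ : Fin 2 => H) :
    (inner ℂ (blockOp 2 !![T₁, T₂; T₂, T₁] x) x : ℂ) =
      (inner ℂ ((T₁ + T₂) (x 0 + x 1)) (x 0 + x 1)
        + inner ℂ ((T₁ - T₂) (x 0 - x 1)) (x 0 - x 1)) / 2 := by
  simp only [PiLp.inner_apply, Fin.sum_univ_two, blockOp_apply, Matrix.of_apply,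
    Matrix.cons_val', Matrix.cons_val_zero, Matrix.cons_val_one, Matrix.empty_val',
    Matrix.cons_val_fin_one, add_apply, sub_apply,
    map_add, map_sub, inner_add_left, inner_add_right, inner_sub_left, inner_sub_right]
  ring

lemma numRadius_blockOp_symm_two_le (T₁ T₂ : H →L[ℂ] H) :
    numRadius (blockOp 2 !![T₁, T₂; T₂, T₁]) ≤
      max (numRadius (T₁ + T₂)) (numRadius (T₁ - T₂)) := by
  set m := max (numRadius (T₁ + T₂)) (numRadius (T₁ - T₂))
  refine numRadius_le_of_norm_inner_le ((numRadius_nonneg _).trans (le_max_left _ _))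
    fun x => ?_
  have hpar := parallelogram_law_with_norm ℂ (x 0) (x 1)
  rw [inner_blockOp_symm_two_self, PiLp.norm_sq_fin_two]
  calc _ ≤ (‖(inner ℂ ((T₁ + T₂) (x 0 + x 1)) (x 0 + x 1) : ℂ)‖
          + ‖(inner ℂ ((T₁ - T₂) (x 0 - x 1)) (x 0 - x 1) : ℂ)‖) / 2 := by
        rw [norm_div, Complex.norm_ofNat]
        gcongr
        exact norm_add_le _ _
    _ ≤ (numRadius (T₁ + T₂) * ‖x 0 + x 1‖ ^ 2 + numRadius (T₁ - T₂) * ‖x 0 - x 1‖ ^ 2) / 2 := by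
        gcongr <;> exact norm_inner_le_numRadius_mul_sq _ _
    _ ≤ (m * ‖x 0 + x 1‖ ^ 2 + m * ‖x 0 - x 1‖ ^ 2) / 2 := by
        gcongr
        exacts [le_max_left _ _, le_max_right _ _]
    _ = m * (‖x 0‖ ^ 2 + ‖x 1‖ ^ 2) := by linear_combination m / 2 * hpar

lemma numRadius_add_le_numRadius_blockOp_symm_two (T₁ T₂ : H →L[ℂ] H) :
    numRadius (T₁ + T₂) ≤ numRadius (blockOp 2 !![T₁, T₂; T₂, T₁]) := by
  refine numRadius_le_numRadius_of_forall_exists fun u =>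
    ⟨WithLp.toLp 2 ![u, u], 2, two_pos, ?_, ?_⟩
  · simp only [PiLp.norm_sq_fin_two, Matrix.cons_val_zero, Matrix.cons_val_one]; ring
  · rw [inner_blockOp_symm_two_self]
    simp only [Matrix.cons_val_zero, Matrix.cons_val_one, sub_self, map_zero, inner_zero_left,
      add_zero, ← two_smul ℂ u, map_smul, inner_smul_left, inner_smul_right, map_ofNat,
      Complex.ofReal_ofNat]
    ring

lemma numRadius_sub_le_numRadius_blockOp_symm_two (T₁ T₂ : H →L[ℂ] H) :
    numRadius (T₁ - T₂) ≤ numRadius (blockOp 2 !![T₁, T₂; T₂, T₁]) := by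
  refine numRadius_le_numRadius_of_forall_exists fun u =>
    ⟨WithLp.toLp 2 ![u, -u], 2, two_pos, ?_, ?_⟩
  · simp only [PiLp.norm_sq_fin_two, Matrix.cons_val_zero, Matrix.cons_val_one, norm_neg]; ring
  · rw [inner_blockOp_symm_two_self]
    simp only [Matrix.cons_val_zero, Matrix.cons_val_one, add_neg_cancel, sub_neg_eq_add, map_zero,
      inner_zero_left, zero_add, ← two_smul ℂ u, map_smul, inner_smul_left, inner_smul_right,
      map_ofNat, Complex.ofReal_ofNat]
    ring

theorem stmt5 (T₁ T₂ : H →L[ℂ] H) :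
    numRadius (blockOp 2 !![T₁, T₂; T₂, T₁]) =
      max (numRadius (T₁ + T₂)) (numRadius (T₁ - T₂)) := by
  exact le_antisymm (numRadius_blockOp_symm_two_le T₁ T₂)
    (max_le (numRadius_add_le_numRadius_blockOp_symm_two T₁ T₂)
      (numRadius_sub_le_numRadius_blockOp_symm_two T₁ T₂))
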